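/- arXiv:math/0305260 — 8 statements merged into one kernel-verified Lean document; each statement's English description precedes it below -/
import Mathlib

section
/- Let λ be a partition of n with largest-square side length s = sq(λ). Then the sum of the hook lengths h_{i,j} over all cells (i,j) of λ with i ≤ s and j ≤ s equals s·n. -/
/-- `l` represents a partition of `n` (0-indexed parts). -/
def IsPartitionFun (n : ℕ) (l : ℕ → ℕ) : Prop :=
  Antitone l ∧ (∀ i, n ≤ i → l i = 0) ∧ ∑ i ∈ Finset.range n, l i = n

/-- side of largest square in the Ferrers diagram: largest `j` with `λ_j ≥ j`. -/
def sqSide (n : ℕ) (l : ℕ → ℕ) : ℕ :=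
  Nat.findGreatest (fun j => 0 < j ∧ j ≤ l (j - 1)) n

/-- the conjugate partition (0-indexed): `λ'_j = #{i : λ_i ≥ j}` (here `j` 0-indexed). -/
def conjPart (n : ℕ) (l : ℕ → ℕ) (j : ℕ) : ℕ :=
  ((Finset.range n).filter fun i => j + 1 ≤ l i).card

/-- hook length of the (0-indexed) cell `(i,j)`:
`h_{i,j} = λ_i - j + λ'_j - i + 1` (with the paper's 1-indexing). -/
def hookLength (n : ℕ) (l : ℕ → ℕ) (i j : ℕ) : ℕ :=
  (l i - (j + 1)) + (conjPart n l j - (i + 1)) + 1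

/-! Inside the `s × s` square no truncation occurs, so `h_{i,j} + (i + j + 1) = λ_i + λ'_j`.
Summed over the square, the left side gains `∑ (i + j + 1) = s³`, while the right side is `s`
times the number of cells in the first `s` rows plus those in the first `s` columns, which is
`n + s²`. -/

open Finset

section Durfee

variable {n : ℕ} {l : ℕ → ℕ}

theorem sqSide_le : sqSide n l ≤ n := Nat.findGreatest_le n

theorem sqSide_le_apply (hl : Antitone l) {i : ℕ} (hi : i < sqSide n l) :
    sqSide n l ≤ l i := by
  have hmax : 0 < sqSide n l ∧ sqSide n l ≤ l (sqSide n l - 1) :=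
    Nat.findGreatest_of_ne_zero (P := fun j => 0 < j ∧ j ≤ l (j - 1)) rfl (by omega)
  exact hmax.2.trans (hl (by omega))

theorem apply_le_sqSide (hl : Antitone l) (hzero : ∀ i, n ≤ i → l i = 0) {i : ℕ}
    (hi : sqSide n l ≤ i) : l i ≤ sqSide n l := by
  refine (hl hi).trans ?_
  rcases lt_or_ge (sqSide n l) n with hlt | hge
  · have := Nat.findGreatest_is_greatest (P := fun j => 0 < j ∧ j ≤ l (j - 1))
      (Nat.lt_succ_self (sqSide n l)) hlt
    simp only [Nat.succ_sub_one] at this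
    omega
  · simp [hzero _ hge]

theorem le_conjPart {m j : ℕ} (hm : m ≤ n) (hrows : ∀ i < m, j < l i) : m ≤ conjPart n l j := by
  calc m = #(range m) := (card_range m).symm
    _ ≤ conjPart n l j := by
      refine card_le_card fun i hi => ?_
      rw [mem_range] at hi
      exact mem_filter.mpr ⟨mem_range.mpr (by omega), hrows i hi⟩

theorem sum_range_conjPart (m : ℕ) :
    ∑ j ∈ range m, conjPart n l j = ∑ i ∈ range n, min m (l i) := by
  simp only [conjPart, card_filter]
  rw [sum_comm]
  refine sum_congr rfl fun i _ => ?_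
  have : (range m).filter (fun j => j + 1 ≤ l i) = range (min m (l i)) := by
    ext j; simp only [mem_filter, mem_range, lt_min_iff]; omega
  rw [← card_filter, this, card_range]

theorem hookLength_add_add_add_one {i j : ℕ} (hj : j < l i) (hi : i < conjPart n l j) :
    hookLength n l i j + (i + j + 1) = l i + conjPart n l j := by
  unfold hookLength; omega

/-- The first `s` rows and the first `s` columns cover the diagram, overlapping in the
Durfee square. -/
theorem sum_range_sqSide_add_sum_conjPart (h : IsPartitionFun n l) :
    ∑ i ∈ range (sqSide n l), l i + ∑ j ∈ range (sqSide n l), conjPart n l j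
      = n + sqSide n l * sqSide n l := by
  obtain ⟨hl, hzero, hsum⟩ := h
  have hsplit := sum_range_add_sum_Ico l (sqSide_le (n := n) (l := l))
  set s := sqSide n l
  have hmin_row : ∑ i ∈ range s, min s (l i) = s * s := by
    rw [sum_congr rfl fun i hi => min_eq_left (sqSide_le_apply hl (mem_range.mp hi)),
      sum_const, card_range, smul_eq_mul]
  have hmin_tail : ∑ i ∈ Ico s n, min s (l i) = ∑ i ∈ Ico s n, l i :=
    sum_congr rfl fun i hi => min_eq_right (apply_le_sqSide hl hzero (mem_Ico.mp hi).1)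
  rw [sum_range_conjPart, ← sum_range_add_sum_Ico _ (sqSide_le (n := n) (l := l)), hmin_row,
    hmin_tail]
  omega

theorem sum_range_sum_range_add_add_one (s : ℕ) :
    ∑ i ∈ range s, ∑ j ∈ range s, (i + j + 1) = s * s * s := by
  have hrow : ∀ i, ∑ j ∈ range s, (i + j + 1) = s * i + ∑ j ∈ range s, j + s := by
    intro i
    rw [sum_add_distrib, sum_add_distrib, sum_const, sum_const, card_range, smul_eq_mul,
      smul_eq_mul, mul_one]
  have hgauss := sum_range_id_mul_two s
  rw [sum_congr rfl fun i _ => hrow i, sum_add_distrib, sum_add_distrib, ← mul_sum, sum_const,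
    sum_const, card_range, smul_eq_mul, smul_eq_mul]
  rcases s with _ | s
  · simp
  · rw [Nat.add_sub_cancel] at hgauss
    nlinarith

end Durfee

/-- the sum of hook lengths over the cells of the maximal `s × s`
square equals `s · n`. -/
theorem stmt1 (n : ℕ) (l : ℕ → ℕ) (h : IsPartitionFun n l) :
    ∑ i ∈ Finset.range (sqSide n l), ∑ j ∈ Finset.range (sqSide n l), hookLength n l i j
      = sqSide n l * n := by
  set s := sqSide n l
  have hrow : ∀ i < s, s ≤ l i := fun i hi => sqSide_le_apply h.1 hi
  have hcol : ∀ j < s, s ≤ conjPart n l j := fun j hj =>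
    le_conjPart sqSide_le fun i hi => hj.trans_le (hrow i hi)
  have hcells : ∑ i ∈ range s, ∑ j ∈ range s, hookLength n l i j + s * s * s
      = s * (∑ i ∈ range s, l i + ∑ j ∈ range s, conjPart n l j) := by
    rw [← sum_range_sum_range_add_add_one, ← sum_add_distrib]
    simp_rw [← sum_add_distrib]
    rw [sum_congr rfl fun i hi => sum_congr rfl fun j hj =>
      hookLength_add_add_add_one ((mem_range.mp hj).trans_le (hrow i (mem_range.mp hi)))
        ((mem_range.mp hi).trans_le (hcol j (mem_range.mp hj)))]
    simp only [sum_add_distrib, sum_const, card_range, smul_eq_mul, ← mul_sum]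
    ring
  rw [sum_range_sqSide_add_sum_conjPart h] at hcells
  linarith
end

section
/- Let c be a conjugacy class of S_n whose elements have c cycles in total (counting fixed points), and let λ be a partition of n. Then |χ_λ(c)| ≤ (2·sq(λ))^c. -/
/-- `ν` is obtained from the partition `μ` of `m` by removing a rim hook (border strip)
of size `k`: `ν ⊆ μ` is a partition of `m - k`, exactly `k` cells are removed, the rows
touched by the removed cells form an interval, and the removed skew shape contains no
`2 × 2` square while being connected (for consecutive touched rows `i`, `i+1` we have
`ν_i = μ_{i+1} - 1`). -/
def IsRimHookRemoval (m : ℕ) (μ ν : ℕ → ℕ) (k : ℕ) : Prop :=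
  IsPartitionFun m μ ∧ IsPartitionFun (m - k) ν ∧ (∀ i, ν i ≤ μ i) ∧
  (∑ i ∈ Finset.range m, (μ i - ν i) = k) ∧
  (∀ i j l, i ≤ l → l ≤ j → ν i < μ i → ν j < μ j → ν l < μ l) ∧
  (∀ i, ν i < μ i → ν (i + 1) < μ (i + 1) → ν i + 1 = μ (i + 1))

/-- the leg length of the rim hook removed in passing from `μ` to `ν`:
one less than the number of rows it occupies. -/
def legLength (m : ℕ) (μ ν : ℕ → ℕ) : ℕ :=
  ((Finset.range m).filter fun i => ν i < μ i).card - 1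

/-!
Each application of the Murnaghan–Nakayama rule strips a rim hook off the current shape, with a
sign `±1`, so all shapes met while expanding `χ_λ(ρ)` along the `c` parts of `ρ` lie inside `λ`.
It therefore suffices that a shape `μ ⊆ λ` has at most `2 sq(λ)` rim hooks of a given size
`k ≥ 1`. A rim hook `μ / ν` of size `k` is determined by its top row, and also by the column
`ν b` of its leftmost cell, `b` being its bottom row. Hooks whose top row is `< sq(λ)` are counted by that row; the others lie in rows
`≥ sq(λ)`, where `λ` has at most `sq(λ)` columns, so they are counted by their leftmost column.
-/

noncomputable def hookTopRow (μ ν : ℕ → ℕ) : ℕ := sInf {i | ν i < μ i}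

noncomputable def hookBotRow (μ ν : ℕ → ℕ) : ℕ := sSup {i | ν i < μ i}

theorem sum_Icc_sub_eq_of_add_one_eq (f g : ℕ → ℤ) {a b : ℕ} (hab : a ≤ b)
    (hstep : ∀ i, a ≤ i → i < b → g i + 1 = f (i + 1)) :
    ∑ i ∈ Finset.Icc a b, (f i - g i) = f a - g b + (b - a) := by
  induction b, hab using Nat.le_induction with
  | base => simp
  | succ b hab ih =>
    rw [Finset.sum_Icc_succ_top (by omega), ih fun i h1 h2 => hstep i h1 (by omega)]
    have := hstep b hab (by omega)
    push_cast
    linarith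

theorem apply_sqSide_le {n : ℕ} {lam : ℕ → ℕ} (hlam : IsPartitionFun n lam) :
    lam (sqSide n lam) ≤ sqSide n lam := by
  by_contra! hlt
  have hn : sqSide n lam < n := by
    by_contra! hn
    have := hlam.2.1 _ hn
    omega
  have : sqSide n lam + 1 ≤ sqSide n lam :=
    Nat.le_findGreatest (P := fun j => 0 < j ∧ j ≤ lam (j - 1)) hn ⟨by omega, by simpa using hlt⟩
  omega

namespace IsRimHookRemoval

variable {m k : ℕ} {μ ν ν' : ℕ → ℕ}

theorem lt_of_apply_lt (h : IsRimHookRemoval m μ ν k) {i : ℕ} (hi : ν i < μ i) : i < m := by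
  by_contra! hm
  have := h.1.2.1 i hm
  omega

theorem rows_nonempty (h : IsRimHookRemoval m μ ν k) (hk : 0 < k) :
    {i | ν i < μ i}.Nonempty := by
  obtain ⟨i, -, hi⟩ := Finset.exists_ne_zero_of_sum_ne_zero (h.2.2.2.1.trans_ne hk.ne')
  exact ⟨i, Nat.lt_of_sub_ne_zero hi⟩

theorem rows_bddAbove (h : IsRimHookRemoval m μ ν k) : BddAbove {i | ν i < μ i} :=
  ⟨m, fun _ hi => (h.lt_of_apply_lt hi).le⟩

theorem apply_hookTopRow_lt (h : IsRimHookRemoval m μ ν k) (hk : 0 < k) :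
    ν (hookTopRow μ ν) < μ (hookTopRow μ ν) :=
  Nat.sInf_mem (h.rows_nonempty hk)

theorem apply_hookBotRow_lt (h : IsRimHookRemoval m μ ν k) (hk : 0 < k) :
    ν (hookBotRow μ ν) < μ (hookBotRow μ ν) :=
  Nat.sSup_mem (h.rows_nonempty hk) h.rows_bddAbove

theorem hookTopRow_le_hookBotRow (h : IsRimHookRemoval m μ ν k) (hk : 0 < k) :
    hookTopRow μ ν ≤ hookBotRow μ ν :=
  Nat.sInf_le (h.apply_hookBotRow_lt hk)

theorem eq_of_lt_hookTopRow (h : IsRimHookRemoval m μ ν k) {i : ℕ} (hi : i < hookTopRow μ ν) :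
    ν i = μ i :=
  le_antisymm (h.2.2.1 i) (not_lt.1 fun hlt => (Nat.sInf_le (show i ∈ {j | ν j < μ j} from hlt)).not_gt hi)

theorem eq_of_hookBotRow_lt (h : IsRimHookRemoval m μ ν k) {i : ℕ} (hi : hookBotRow μ ν < i) :
    ν i = μ i :=
  le_antisymm (h.2.2.1 i) (not_lt.1 fun hlt => (le_csSup h.rows_bddAbove hlt).not_gt hi)

theorem apply_lt_of_mem_Icc (h : IsRimHookRemoval m μ ν k) (hk : 0 < k) {i : ℕ}
    (h₁ : hookTopRow μ ν ≤ i) (h₂ : i ≤ hookBotRow μ ν) : ν i < μ i :=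
  h.2.2.2.2.1 _ _ i h₁ h₂ (h.apply_hookTopRow_lt hk) (h.apply_hookBotRow_lt hk)

theorem apply_add_one_eq (h : IsRimHookRemoval m μ ν k) (hk : 0 < k) {i : ℕ}
    (h₁ : hookTopRow μ ν ≤ i) (h₂ : i < hookBotRow μ ν) : ν i + 1 = μ (i + 1) :=
  h.2.2.2.2.2 i (h.apply_lt_of_mem_Icc hk h₁ h₂.le) (h.apply_lt_of_mem_Icc hk (by omega) h₂)

theorem apply_hookBotRow_add_one_le (h : IsRimHookRemoval m μ ν k) :
    μ (hookBotRow μ ν + 1) ≤ ν (hookBotRow μ ν) :=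
  (h.eq_of_hookBotRow_lt (Nat.lt_succ_self _)).symm.le.trans (h.2.1.1 (Nat.le_succ _))

/-- The sum over the rows of the hook telescopes, since consecutive rows of a rim hook share
exactly one column. -/
theorem size_eq (h : IsRimHookRemoval m μ ν k) (hk : 0 < k) :
    k + hookTopRow μ ν + ν (hookBotRow μ ν) = μ (hookTopRow μ ν) + hookBotRow μ ν := by
  set a := hookTopRow μ ν
  set b := hookBotRow μ ν
  have hab : a ≤ b := h.hookTopRow_le_hookBotRow hk
  have hb : b < m := h.lt_of_apply_lt (h.apply_hookBotRow_lt hk)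
  have hsum : ∑ i ∈ Finset.Icc a b, (μ i - ν i) = k := by
    rw [← h.2.2.2.1]
    refine Finset.sum_subset (fun i hi => ?_) fun i _ hi => ?_
    · simp only [Finset.mem_Icc, Finset.mem_range] at hi ⊢
      omega
    · rw [Finset.mem_Icc, not_and_or, not_le, not_le] at hi
      rcases hi with hi | hi
      · simp [h.eq_of_lt_hookTopRow hi]
      · simp [h.eq_of_hookBotRow_lt hi]
  have hcast : ∑ i ∈ Finset.Icc a b, ((μ i : ℤ) - ν i) = k := by
    rw [← hsum, Nat.cast_sum]
    exact Finset.sum_congr rfl fun i _ => (Nat.cast_sub (h.2.2.1 i)).symm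
  rw [sum_Icc_sub_eq_of_add_one_eq _ _ hab
    fun i h₁ h₂ => by exact_mod_cast h.apply_add_one_eq hk h₁ h₂] at hcast
  have := h.2.2.1 b
  omega

theorem hookBotRow_le_of_hookTopRow_eq (h : IsRimHookRemoval m μ ν k)
    (h' : IsRimHookRemoval m μ ν' k) (hk : 0 < k) (htop : hookTopRow μ ν = hookTopRow μ ν') :
    hookBotRow μ ν ≤ hookBotRow μ ν' := by
  by_contra! hlt
  have := htop ▸ h.size_eq hk
  have := h'.size_eq hk
  have := h.apply_hookBotRow_lt hk
  have := h'.apply_hookBotRow_add_one_le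
  have := h.1.1 (show hookBotRow μ ν' + 1 ≤ hookBotRow μ ν from hlt)
  omega

theorem hookBotRow_le_of_apply_hookBotRow_le (h : IsRimHookRemoval m μ ν k)
    (h' : IsRimHookRemoval m μ ν' k) (hk : 0 < k)
    (hcol : ν' (hookBotRow μ ν') ≤ ν (hookBotRow μ ν)) :
    hookBotRow μ ν ≤ hookBotRow μ ν' := by
  by_contra! hlt
  have := h.apply_hookBotRow_lt hk
  have := h'.apply_hookBotRow_add_one_le
  have := h.1.1 (show hookBotRow μ ν' + 1 ≤ hookBotRow μ ν from hlt)
  omega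

theorem hookTopRow_eq_of_hookBotRow_eq (h : IsRimHookRemoval m μ ν k)
    (h' : IsRimHookRemoval m μ ν' k) (hk : 0 < k) (hbot : hookBotRow μ ν = hookBotRow μ ν')
    (hcol : ν (hookBotRow μ ν) = ν' (hookBotRow μ ν')) :
    hookTopRow μ ν = hookTopRow μ ν' := by
  have := h.size_eq hk
  have := h'.size_eq hk
  rcases lt_trichotomy (hookTopRow μ ν) (hookTopRow μ ν') with hlt | heq | hlt
  · have := h.1.1 hlt.le
    omega
  · exact heq
  · have := h.1.1 hlt.le
    omega

theorem eq_of_hookRows_eq (h : IsRimHookRemoval m μ ν k) (h' : IsRimHookRemoval m μ ν' k)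
    (hk : 0 < k) (htop : hookTopRow μ ν = hookTopRow μ ν')
    (hbot : hookBotRow μ ν = hookBotRow μ ν') : ν = ν' := by
  funext i
  rcases lt_or_ge i (hookTopRow μ ν) with hi | h₁
  · rw [h.eq_of_lt_hookTopRow hi, h'.eq_of_lt_hookTopRow (htop ▸ hi)]
  rcases lt_or_ge (hookBotRow μ ν) i with hi | h₂
  · rw [h.eq_of_hookBotRow_lt hi, h'.eq_of_hookBotRow_lt (hbot ▸ hi)]
  rcases h₂.lt_or_eq with h₂ | rfl
  · have := h.apply_add_one_eq hk h₁ h₂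
    have := h'.apply_add_one_eq hk (htop ▸ h₁) (hbot ▸ h₂)
    omega
  · have := h.size_eq hk
    have := h'.size_eq hk
    rw [← htop, ← hbot] at this
    omega

theorem eq_of_hookTopRow_eq (h : IsRimHookRemoval m μ ν k) (h' : IsRimHookRemoval m μ ν' k)
    (hk : 0 < k) (htop : hookTopRow μ ν = hookTopRow μ ν') : ν = ν' :=
  h.eq_of_hookRows_eq h' hk htop <| le_antisymm (h.hookBotRow_le_of_hookTopRow_eq h' hk htop)
    (h'.hookBotRow_le_of_hookTopRow_eq h hk htop.symm)

theorem eq_of_apply_hookBotRow_eq (h : IsRimHookRemoval m μ ν k)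
    (h' : IsRimHookRemoval m μ ν' k) (hk : 0 < k)
    (hcol : ν (hookBotRow μ ν) = ν' (hookBotRow μ ν')) : ν = ν' := by
  have hbot : hookBotRow μ ν = hookBotRow μ ν' :=
    le_antisymm (h.hookBotRow_le_of_apply_hookBotRow_le h' hk hcol.ge)
      (h'.hookBotRow_le_of_apply_hookBotRow_le h hk hcol.le)
  exact h.eq_of_hookTopRow_eq h' hk (h.hookTopRow_eq_of_hookBotRow_eq h' hk hbot hcol)

theorem apply_hookBotRow_lt_sqSide {n : ℕ} {lam : ℕ → ℕ} (hlam : IsPartitionFun n lam)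
    (hsub : ∀ i, μ i ≤ lam i) (h : IsRimHookRemoval m μ ν k) (hk : 0 < k)
    (htop : sqSide n lam ≤ hookTopRow μ ν) : ν (hookBotRow μ ν) < sqSide n lam :=
  calc ν (hookBotRow μ ν) < μ (hookBotRow μ ν) := h.apply_hookBotRow_lt hk
    _ ≤ μ (hookTopRow μ ν) := h.1.1 (h.hookTopRow_le_hookBotRow hk)
    _ ≤ lam (hookTopRow μ ν) := hsub _
    _ ≤ lam (sqSide n lam) := hlam.1 htop
    _ ≤ sqSide n lam := apply_sqSide_le hlam

end IsRimHookRemoval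

section Counting

variable {n m k : ℕ} {lam μ : ℕ → ℕ}

theorem exists_injOn_setOf_isRimHookRemoval (hlam : IsPartitionFun n lam)
    (hsub : ∀ i, μ i ≤ lam i) (hk : 0 < k) :
    ∃ f : (ℕ → ℕ) → ℕ, Set.MapsTo f {ν | IsRimHookRemoval m μ ν k} (Set.Iio (2 * sqSide n lam)) ∧
      Set.InjOn f {ν | IsRimHookRemoval m μ ν k} := by
  refine ⟨fun ν => if hookTopRow μ ν < sqSide n lam then hookTopRow μ ν
    else sqSide n lam + ν (hookBotRow μ ν), fun ν hν => ?_, fun ν hν ν' hν' he => ?_⟩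
  · simp only [Set.mem_Iio]
    split_ifs with htop
    · omega
    · have := hν.apply_hookBotRow_lt_sqSide hlam hsub hk (not_lt.1 htop)
      omega
  · dsimp only at he
    split_ifs at he with h₁ h₂ h₂
    · exact hν.eq_of_hookTopRow_eq hν' hk he
    · omega
    · omega
    · exact hν.eq_of_apply_hookBotRow_eq hν' hk (by omega)

theorem finite_setOf_isRimHookRemoval (hlam : IsPartitionFun n lam)
    (hsub : ∀ i, μ i ≤ lam i) (hk : 0 < k) : {ν | IsRimHookRemoval m μ ν k}.Finite := by
  obtain ⟨f, hmaps, hinj⟩ := exists_injOn_setOf_isRimHookRemoval (m := m) hlam hsub hk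
  exact Set.Finite.of_injOn hmaps hinj (Set.finite_Iio _)

theorem ncard_setOf_isRimHookRemoval_le (hlam : IsPartitionFun n lam)
    (hsub : ∀ i, μ i ≤ lam i) (hk : 0 < k) :
    {ν | IsRimHookRemoval m μ ν k}.ncard ≤ 2 * sqSide n lam := by
  obtain ⟨f, hmaps, hinj⟩ := exists_injOn_setOf_isRimHookRemoval (m := m) hlam hsub hk
  simpa using Set.ncard_le_ncard_of_injOn f hmaps hinj (Set.finite_Iio _)

end Counting

theorem abs_finsum_mem_le_ncard_nsmul {α R : Type*} [AddCommGroup R] [LinearOrder R]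
    [IsOrderedAddMonoid R] {s : Set α} (hs : s.Finite) {f : α → R} {B : R}
    (hf : ∀ x ∈ s, |f x| ≤ B) : |∑ᶠ x ∈ s, f x| ≤ s.ncard • B := by
  rw [finsum_mem_eq_finite_toFinset_sum f hs, Set.ncard_eq_toFinset_card s hs]
  exact (Finset.abs_sum_le_sum_abs _ _).trans
    (Finset.sum_le_card_nsmul _ _ _ fun x hx => hf x (hs.mem_toFinset.1 hx))

theorem abs_le_pow_card_of_le {n : ℕ} {lam : ℕ → ℕ} (hlam : IsPartitionFun n lam)
    (F : (ℕ → ℕ) → Multiset ℕ → ℤ) (hbase : F (fun _ => 0) 0 = 1)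
    (hMN : ∀ (m : ℕ) (μ : ℕ → ℕ) (ρ : Multiset ℕ) (k : ℕ),
      IsPartitionFun m μ → k ∈ ρ →
      F μ ρ = ∑ᶠ ν ∈ {ν : ℕ → ℕ | IsRimHookRemoval m μ ν k},
        (-1 : ℤ) ^ legLength m μ ν * F ν (ρ.erase k))
    (ρ : Multiset ℕ) (hρpos : ∀ k ∈ ρ, 0 < k) {m : ℕ} {μ : ℕ → ℕ} (hμ : IsPartitionFun m μ)
    (hsub : ∀ i, μ i ≤ lam i) (hsum : ρ.sum = m) :
    |F μ ρ| ≤ ((2 * sqSide n lam : ℕ) : ℤ) ^ Multiset.card ρ := by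
  induction ρ using Multiset.induction_on generalizing m μ with
  | empty =>
    obtain rfl : m = 0 := hsum.symm
    obtain rfl : μ = fun _ => 0 := funext fun i => hμ.2.1 i i.zero_le
    simp [hbase]
  | cons k ρ ih =>
    have hk : 0 < k := hρpos k (Multiset.mem_cons_self k ρ)
    rw [Multiset.sum_cons] at hsum
    have hterm : ∀ ν ∈ {ν | IsRimHookRemoval m μ ν k},
        |(-1 : ℤ) ^ legLength m μ ν * F ν ρ| ≤ ((2 * sqSide n lam : ℕ) : ℤ) ^ Multiset.card ρ := by
      intro ν hν
      rw [abs_mul, abs_pow, abs_neg, abs_one, one_pow, one_mul]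
      exact ih (fun j hj => hρpos j (Multiset.mem_cons_of_mem hj)) hν.2.1
        (fun i => (hν.2.2.1 i).trans (hsub i)) (by omega)
    rw [hMN m μ _ k hμ (Multiset.mem_cons_self k ρ), Multiset.erase_cons_head,
      Multiset.card_cons, pow_succ']
    refine (abs_finsum_mem_le_ncard_nsmul (finite_setOf_isRimHookRemoval hlam hsub hk)
      hterm).trans ?_
    rw [nsmul_eq_mul]
    gcongr
    exact_mod_cast ncard_setOf_isRimHookRemoval_le hlam hsub hk

/-- let `c` be a conjugacy class of `S_n` whose elements have `c` cycles
in total (its cycle type `ρ` is a multiset of `c` positive integers summing to `n`),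
and let `λ ⊢ n`.  For any family `F` assigning to each partition and cycle type an
integer, satisfying the normalization `F ∅ ∅ = 1` and the Murnaghan–Nakayama rule
(so that `F λ ρ = χ_λ(c)`), we have `|χ_λ(c)| ≤ (2 · sq(λ))^c`. -/
theorem stmt3 (n c : ℕ) (lam : ℕ → ℕ) (hlam : IsPartitionFun n lam)
    (F : (ℕ → ℕ) → Multiset ℕ → ℤ)
    (hbase : F (fun _ => 0) 0 = 1)
    (hMN : ∀ (m : ℕ) (μ : ℕ → ℕ) (ρ : Multiset ℕ) (k : ℕ),
      IsPartitionFun m μ → k ∈ ρ →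
      F μ ρ = ∑ᶠ ν ∈ {ν : ℕ → ℕ | IsRimHookRemoval m μ ν k},
        (-1 : ℤ) ^ legLength m μ ν * F ν (ρ.erase k))
    (ρ : Multiset ℕ) (hρsum : ρ.sum = n) (hρpos : ∀ k ∈ ρ, 1 ≤ k)
    (hρcard : Multiset.card ρ = c) :
    |F lam ρ| ≤ ((2 * sqSide n lam : ℕ) : ℤ) ^ c := by
  subst hρcard
  exact abs_le_pow_card_of_le hlam F hbase hMN ρ hρpos hlam (fun _ => le_rfl) hρsum
end

section
/- For a partition λ of n, a partition with a single k-hook-removal structure: for any fixed k ≥ 1, the number of rim hooks of length k that can be removed from λ is at most 2·sq(λ). -/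
/-!
A rim hook of fixed size is determined by its top row, and also by the column of its bottom-left
cell: in both cases the remaining end is forced by the size. If both the top row and that column
were at least `s = sq(λ)`, the cell `(s, s)` would lie in `λ`. So every removable hook has its top
row or its bottom-left column among the first `s`, giving at most `s + s` hooks.
-/

open Finset

lemma Set.encard_le_of_mapsTo_Iio {α : Type*} {S : Set α} {f : α → ℕ} {s : ℕ}
    (hf : Set.MapsTo f S (Set.Iio s)) (hinj : Set.InjOn f S) : S.encard ≤ s :=
  (Set.encard_le_encard_of_injOn hf hinj).trans_eq <| by
    rw [← (Set.finite_Iio s).cast_ncard_eq, Set.ncard_Iio_nat]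

lemma apply_sqSide_le_s4 {n : ℕ} {l : ℕ → ℕ} (hs : sqSide n l < n) :
    l (sqSide n l) ≤ sqSide n l := by
  by_contra! h
  have hsucc : sqSide n l + 1 ≤ sqSide n l :=
    Nat.le_findGreatest (P := fun j => 0 < j ∧ j ≤ l (j - 1)) hs
      ⟨Nat.succ_pos _, by simpa using h⟩
  omega

namespace RimHook

noncomputable def topRow (μ ν : ℕ → ℕ) : ℕ := sInf {i | ν i < μ i}

noncomputable def bottomRow (μ ν : ℕ → ℕ) : ℕ := sSup {i | ν i < μ i}

/-- Normal form of a rim hook removal `μ ⟶ ν` of size `k`. A border strip from row `a` to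
row `b` occupies columns `ν b, …, μ a - 1`, and consecutive rows share exactly one column,
so it has `(μ a - ν b) + (b - a)` cells; this is `size`. -/
structure Shape (m k : ℕ) (μ ν : ℕ → ℕ) : Prop where
  antitone_outer : Antitone μ
  antitone_inner : Antitone ν
  top_le_bottom : topRow μ ν ≤ bottomRow μ ν
  bottom_lt : bottomRow μ ν < m
  apply_bottom_lt : ν (bottomRow μ ν) < μ (bottomRow μ ν)
  eq_of_lt_top : ∀ i < topRow μ ν, ν i = μ i
  eq_of_bottom_lt : ∀ i, bottomRow μ ν < i → ν i = μ i
  succ_eq : ∀ i, topRow μ ν ≤ i → i < bottomRow μ ν → ν i + 1 = μ (i + 1)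
  size : ν (bottomRow μ ν) + k = μ (topRow μ ν) + (bottomRow μ ν - topRow μ ν)

variable {m k : ℕ} {μ ν ν' : ℕ → ℕ}

lemma sum_Icc_sub_of_strip {a b : ℕ} (hμ : Antitone μ) (hab : a ≤ b)
    (hlt : ∀ i, a ≤ i → i ≤ b → ν i < μ i)
    (hstep : ∀ i, a ≤ i → i < b → ν i + 1 = μ (i + 1)) :
    ∑ i ∈ Icc a b, (μ i - ν i) = μ a - ν b + (b - a) := by
  induction b, hab using Nat.le_induction with
  | base => simp
  | succ b hab ih =>
    rw [sum_Icc_succ_top (by omega), ih (fun i h₁ h₂ => hlt i h₁ (by omega))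
      (fun i h₁ h₂ => hstep i h₁ (by omega))]
    have hb := hstep b hab (by omega)
    have hμb := hμ (show a ≤ b + 1 by omega)
    have hb' := hlt (b + 1) (by omega) le_rfl
    omega

lemma _root_.IsRimHookRemoval.shape (hk : 0 < k) (h : IsRimHookRemoval m μ ν k) :
    Shape m k μ ν := by
  obtain ⟨⟨hμ, hμ0, -⟩, ⟨hν, -, -⟩, hle, hsum, hconn, hstrip⟩ := h
  set T : Set ℕ := {i | ν i < μ i}
  have eq_of_notMem : ∀ i ∉ T, ν i = μ i := fun i hi => le_antisymm (hle i) (not_lt.mp hi)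
  have hT : T.Nonempty := by
    by_contra hT
    have hzero : ∀ i ∈ range m, μ i - ν i = 0 := fun i _ => by
      rw [eq_of_notMem i fun hi => hT ⟨i, hi⟩, Nat.sub_self]
    rw [sum_eq_zero hzero] at hsum
    omega
  have hTm : ∀ i ∈ T, i < m := fun i hi => by
    by_contra! him
    have : ν i < μ i := hi
    rw [hμ0 i him] at this
    omega
  have hbdd : BddAbove T := ⟨m, fun i hi => (hTm i hi).le⟩
  have htop : topRow μ ν ∈ T := Nat.sInf_mem hT
  have hbot : bottomRow μ ν ∈ T := Nat.sSup_mem hT hbdd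
  have hab : topRow μ ν ≤ bottomRow μ ν := Nat.sInf_le hbot
  have hlt : ∀ i, topRow μ ν ≤ i → i ≤ bottomRow μ ν → ν i < μ i :=
    fun i h₁ h₂ => hconn _ _ i h₁ h₂ htop hbot
  have hstep : ∀ i, topRow μ ν ≤ i → i < bottomRow μ ν → ν i + 1 = μ (i + 1) :=
    fun i h₁ h₂ => hstrip i (hlt i h₁ h₂.le) (hlt (i + 1) (by omega) h₂)
  have hout : ∀ i, i < topRow μ ν ∨ bottomRow μ ν < i → ν i = μ i := by
    rintro i (hi | hi)
    · exact eq_of_notMem i (Nat.notMem_of_lt_sInf hi)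
    · exact eq_of_notMem i fun hiT => hi.not_ge (le_csSup hbdd hiT)
  have hsum' : ∑ i ∈ Icc (topRow μ ν) (bottomRow μ ν), (μ i - ν i) = k := by
    rw [← hsum]
    refine sum_subset (fun i hi => ?_) (fun i _ hi => ?_)
    · simp only [mem_Icc, mem_range] at hi ⊢
      exact lt_of_le_of_lt hi.2 (hTm _ hbot)
    · simp only [mem_Icc, not_and_or, not_le] at hi
      rw [hout i hi, Nat.sub_self]
  rw [sum_Icc_sub_of_strip hμ hab hlt hstep] at hsum'
  have hμ_top : ν (bottomRow μ ν) < μ (topRow μ ν) := lt_of_lt_of_le hbot (hμ hab)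
  exact
    { antitone_outer := hμ
      antitone_inner := hν
      top_le_bottom := hab
      bottom_lt := hTm _ hbot
      apply_bottom_lt := hbot
      eq_of_lt_top := fun i hi => hout i (.inl hi)
      eq_of_bottom_lt := fun i hi => hout i (.inr hi)
      succ_eq := hstep
      size := by omega }

namespace Shape

lemma ext_of_rows (F : Shape m k μ ν) (F' : Shape m k μ ν')
    (ht : topRow μ ν = topRow μ ν') (hb : bottomRow μ ν = bottomRow μ ν') : ν = ν' := by
  have hcol : ν (bottomRow μ ν) = ν' (bottomRow μ ν') := by
    have := F.size
    have := F'.size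
    rw [← ht, ← hb] at *
    omega
  funext i
  rcases lt_or_ge i (topRow μ ν) with hi | hi
  · rw [F.eq_of_lt_top i hi, F'.eq_of_lt_top i (ht ▸ hi)]
  rcases lt_trichotomy i (bottomRow μ ν) with hi' | rfl | hi'
  · have := F.succ_eq i hi hi'
    have := F'.succ_eq i (ht ▸ hi) (hb ▸ hi')
    omega
  · rw [hcol, hb]
  · rw [F.eq_of_bottom_lt i hi', F'.eq_of_bottom_lt i (hb ▸ hi')]

lemma bottomRow_le_of_topRow_eq (F : Shape m k μ ν) (F' : Shape m k μ ν')
    (ht : topRow μ ν = topRow μ ν') : bottomRow μ ν' ≤ bottomRow μ ν := by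
  by_contra! hb
  have h₁ := F'.succ_eq _ (ht ▸ F.top_le_bottom) hb
  have h₂ := F.eq_of_bottom_lt (bottomRow μ ν + 1) (by omega)
  have h₃ := F.antitone_inner (show bottomRow μ ν ≤ bottomRow μ ν + 1 by omega)
  have h₄ := F'.antitone_inner hb.le
  have h₅ := F.size
  have h₆ := F'.size
  rw [← ht] at h₆
  omega

lemma eq_of_topRow_eq (F : Shape m k μ ν) (F' : Shape m k μ ν')
    (ht : topRow μ ν = topRow μ ν') : ν = ν' :=
  F.ext_of_rows F' ht <|
    le_antisymm (F'.bottomRow_le_of_topRow_eq F ht.symm) (F.bottomRow_le_of_topRow_eq F' ht)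

lemma bottomRow_le_of_col_eq (F : Shape m k μ ν) (F' : Shape m k μ ν')
    (hc : ν (bottomRow μ ν) = ν' (bottomRow μ ν')) :
    bottomRow μ ν' ≤ bottomRow μ ν := by
  by_contra! hb
  have h₁ := F'.apply_bottom_lt
  have h₂ := F.antitone_outer (show bottomRow μ ν + 1 ≤ bottomRow μ ν' by omega)
  have h₃ := F.eq_of_bottom_lt (bottomRow μ ν + 1) (by omega)
  have h₄ := F.antitone_inner (show bottomRow μ ν ≤ bottomRow μ ν + 1 by omega)
  omega

lemma topRow_le_of_col_eq (F : Shape m k μ ν) (F' : Shape m k μ ν')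
    (hb : bottomRow μ ν = bottomRow μ ν') (hc : ν (bottomRow μ ν) = ν' (bottomRow μ ν')) :
    topRow μ ν' ≤ topRow μ ν := by
  by_contra! ht
  have h₁ := F.antitone_outer ht.le
  have h₂ := F'.top_le_bottom
  have h₃ := F.size
  have h₄ := F'.size
  rw [← hb] at h₂ h₄ hc
  omega

lemma eq_of_col_eq (F : Shape m k μ ν) (F' : Shape m k μ ν')
    (hc : ν (bottomRow μ ν) = ν' (bottomRow μ ν')) : ν = ν' := by
  have hb := le_antisymm (F'.bottomRow_le_of_col_eq F hc.symm) (F.bottomRow_le_of_col_eq F' hc)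
  exact F.ext_of_rows F' (le_antisymm (F'.topRow_le_of_col_eq F hb.symm hc.symm)
    (F.topRow_le_of_col_eq F' hb hc)) hb

/-- Otherwise the cell `(s, s)`, with `s = sqSide m μ`, would lie weakly between the two ends of
the hook and hence in `μ`, giving a larger square. -/
lemma topRow_lt_or_col_lt (F : Shape m k μ ν) :
    topRow μ ν < sqSide m μ ∨ ν (bottomRow μ ν) < sqSide m μ := by
  refine (lt_or_ge _ _).imp_right fun ht => ?_
  calc ν (bottomRow μ ν) < μ (bottomRow μ ν) := F.apply_bottom_lt
    _ ≤ μ (sqSide m μ) := F.antitone_outer (ht.trans F.top_le_bottom)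
    _ ≤ sqSide m μ := apply_sqSide_le_s4 (ht.trans_lt (F.top_le_bottom.trans_lt F.bottom_lt))

end Shape

end RimHook

open RimHook in
theorem stmt4_general (n k : ℕ) (hk : 1 ≤ k) (l : ℕ → ℕ) :
    {ν : ℕ → ℕ | IsRimHookRemoval n l ν k}.ncard ≤ 2 * sqSide n l := by
  set S := {ν : ℕ → ℕ | IsRimHookRemoval n l ν k}
  set s := sqSide n l
  have shape : ∀ ν ∈ S, Shape n k l ν := fun ν hν => IsRimHookRemoval.shape hk hν
  have hcover : S ⊆ {ν ∈ S | topRow l ν < s} ∪ {ν ∈ S | ν (bottomRow l ν) < s} :=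
    fun ν hν => (shape ν hν).topRow_lt_or_col_lt.imp (⟨hν, ·⟩) (⟨hν, ·⟩)
  have htop : {ν ∈ S | topRow l ν < s}.encard ≤ s :=
    Set.encard_le_of_mapsTo_Iio (fun ν hν => hν.2) fun ν hν ν' hν' h =>
      (shape ν hν.1).eq_of_topRow_eq (shape ν' hν'.1) h
  have hcol : {ν ∈ S | ν (bottomRow l ν) < s}.encard ≤ s :=
    Set.encard_le_of_mapsTo_Iio (f := fun ν => ν (bottomRow l ν))
      (fun ν hν => by exact hν.2)
      fun ν hν ν' hν' h => (shape ν hν.1).eq_of_col_eq (shape ν' hν'.1) h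
  refine (Set.encard_le_coe_iff_finite_ncard_le.mp ?_).2
  calc S.encard ≤ _ := Set.encard_le_encard hcover
    _ ≤ _ := Set.encard_union_le _ _
    _ ≤ s + s := add_le_add htop hcol
    _ = (2 * s : ℕ) := by push_cast; ring

/-- for any `k ≥ 1`, the number of rim hooks of length `k` that can be
removed from a partition `λ` of `n` is at most `2 · sq(λ)`. -/
theorem stmt4 (n k : ℕ) (hk : 1 ≤ k) (l : ℕ → ℕ) (h : IsPartitionFun n l) :
    {ν : ℕ → ℕ | IsRimHookRemoval n l ν k}.ncard ≤ 2 * sqSide n l :=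
  stmt4_general n k hk l
end

section
/- Let λ be a partition of n with λ_1 ≥ n/2. Then χ_λ(1) ≥ C(λ_1, n - λ_1) · χ_μ(1), where μ = λ\λ_1 is the partition obtained from λ by deleting its first row. -/
/-- the cells of the Ferrers diagram of `λ` (0-indexed). -/
def cells (n : ℕ) (l : ℕ → ℕ) : Finset (ℕ × ℕ) :=
  (Finset.range n ×ˢ Finset.range n).filter fun p => p.2 < l p.1

/-- the degree `χ_λ(1)` of the irreducible character of `S_n` indexed by `λ`, given by
the hook length formula `χ_λ(1) = n! / ∏ h_{i,j}`. -/
noncomputable def charDegree (n : ℕ) (l : ℕ → ℕ) : ℝ :=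
  (n.factorial : ℝ) / ∏ p ∈ cells n l, (hookLength n l p.1 p.2 : ℝ)

/-!
Deleting the first row of `λ` changes no hook outside that row, so by the hook length formula
`χ_λ(1) / χ_μ(1) = n! / (m! ∏_j h_{0,j})` with `m = n - λ₁`. The first-row hook is
`h_{0,j} = λ₁ - j + μ'_j`, where `μ'_j ≤ m`, and `μ'_j = 0` for `j ≥ m` because `μ₁ ≤ m`.
Hence, when `m ≤ λ₁`, `∏_j h_{0,j} ≤ (λ₁ + m)! / λ₁! · (λ₁ - m)! = n! / (m! C(λ₁, m))`;
when `m > λ₁` the binomial coefficient vanishes.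
-/

open Finset Nat

lemma choose_mul_factorial_mul_prod_le (k m : ℕ) (c : ℕ → ℕ) (hc : ∀ j, c j ≤ m)
    (hc0 : ∀ j, m ≤ j → c j = 0) :
    k.choose m * m ! * ∏ j ∈ range k, (k - j + c j) ≤ (k + m)! := by
  rcases lt_or_ge k m with hkm | hmk
  · simp [Nat.choose_eq_zero_of_lt hkm]
  obtain ⟨d, rfl⟩ : ∃ d, k = m + d := ⟨k - m, by omega⟩
  have hhead : ∏ j ∈ range m, (m + d - j + c j) ≤ (m + d + m).descFactorial m := by
    rw [descFactorial_eq_prod_range]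
    exact prod_le_prod' fun j hj => by have := hc j; simp only [mem_range] at hj; omega
  have htail : ∏ j ∈ range d, (m + d - (m + j) + c (m + j)) = d ! := by
    rw [← descFactorial_self, descFactorial_eq_prod_range]
    exact prod_congr rfl fun j _ => by rw [hc0 _ (by omega)]; omega
  calc (m + d).choose m * m ! * ∏ j ∈ range (m + d), (m + d - j + c j)
      ≤ (m + d).choose m * m ! * ((m + d + m).descFactorial m * d !) := by
        rw [prod_range_add, htail]
        exact Nat.mul_le_mul_left _ (Nat.mul_le_mul_right _ hhead)
    _ = (m + d + m)! := by
        have hk : d ! * (m + d).descFactorial m = (m + d)! := by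
          simpa using factorial_mul_descFactorial (show m ≤ m + d by omega)
        have hn : (m + d)! * (m + d + m).descFactorial m = (m + d + m)! := by
          simpa using factorial_mul_descFactorial (show m ≤ m + d + m by omega)
        rw [← hn, ← hk, descFactorial_eq_factorial_mul_choose (m + d) m]
        ring

lemma isPartitionFun_of_sum_eq {N s : ℕ} {f : ℕ → ℕ} (hf : Antitone f)
    (hz : ∀ i, N ≤ i → f i = 0) (hs : ∑ i ∈ range N, f i = s) : IsPartitionFun s f := by
  have hzs : ∀ i, s ≤ i → f i = 0 := by
    intro i hi
    by_contra hne
    have hiN : i < N := by by_contra hiN; exact hne (hz i (by omega))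
    have : i + 1 ≤ s := calc
      i + 1 = ∑ _t ∈ range (i + 1), 1 := by simp
      _ ≤ ∑ t ∈ range (i + 1), f t :=
        sum_le_sum fun t ht => (Nat.one_le_iff_ne_zero.mpr hne).trans (hf (by simpa using ht))
      _ ≤ s := hs ▸ sum_le_sum_of_subset (range_subset_range.mpr hiN)
    omega
  refine ⟨hf, hzs, ?_⟩
  have hpad : ∀ K ≤ N + s, (∀ i, K ≤ i → f i = 0) →
      ∑ i ∈ range K, f i = ∑ i ∈ range (N + s), f i := fun K hK hKz =>
    sum_subset (range_subset_range.mpr hK) fun i _ hiK => hKz i (by simpa using hiK)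
  rw [hpad s (by omega) hzs, ← hpad N (by omega) hz, hs]

lemma conjPart_le (N : ℕ) (l : ℕ → ℕ) (j : ℕ) : conjPart N l j ≤ N :=
  (card_filter_le _ _).trans (card_range N).le

lemma conjPart_eq_zero {l : ℕ → ℕ} (hl : Antitone l) {j : ℕ} (hj : l 0 ≤ j) (N : ℕ) :
    conjPart N l j = 0 := by
  rw [conjPart, Finset.card_eq_zero, filter_eq_empty_iff]
  intro i _
  have := hl (Nat.zero_le i)
  omega

lemma conjPart_succ (N : ℕ) (l : ℕ → ℕ) (j : ℕ) :
    conjPart (N + 1) l j = conjPart N (fun i => l (i + 1)) j + if j < l 0 then 1 else 0 := by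
  simp only [conjPart, card_filter, sum_range_succ', Nat.add_one_le_iff]

lemma conjPart_eq_of_le {N N' : ℕ} {l : ℕ → ℕ} (hN : N ≤ N') (hz : ∀ i, N ≤ i → l i = 0)
    (j : ℕ) : conjPart N' l j = conjPart N l j := by
  unfold conjPart
  congr 1
  ext i
  simp only [mem_filter, mem_range]
  constructor
  · rintro ⟨_, hi⟩
    refine ⟨?_, hi⟩
    by_contra hiN
    have := hz i (by omega)
    omega
  · rintro ⟨hi, hj⟩
    exact ⟨by omega, hj⟩

def hookProd (n : ℕ) (l : ℕ → ℕ) : ℕ :=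
  ∏ p ∈ cells n l, hookLength n l p.1 p.2

lemma hookProd_pos (n : ℕ) (l : ℕ → ℕ) : 0 < hookProd n l :=
  prod_pos fun _ _ => Nat.succ_pos _

lemma charDegree_eq_factorial_div_hookProd (n : ℕ) (l : ℕ → ℕ) :
    charDegree n l = n ! / hookProd n l := by
  rw [charDegree, hookProd, Nat.cast_prod]

namespace IsPartitionFun

variable {n : ℕ} {l : ℕ → ℕ}

lemma apply_le (h : IsPartitionFun n l) (i : ℕ) : l i ≤ n := by
  rcases lt_or_ge i n with hi | hi
  · exact h.2.2 ▸ single_le_sum (fun _ _ => Nat.zero_le _) (mem_range.mpr hi)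
  · simp [h.2.1 i hi]

lemma tail (h : IsPartitionFun n l) : IsPartitionFun (n - l 0) fun i => l (i + 1) := by
  refine isPartitionFun_of_sum_eq (N := n) (fun a b hab => h.1 (by omega))
    (fun i hi => h.2.1 _ (by omega)) ?_
  have hsum := sum_range_succ l n
  rw [sum_range_succ', h.2.1 n le_rfl, h.2.2] at hsum
  omega

lemma mem_cells (h : IsPartitionFun n l) {p : ℕ × ℕ} : p ∈ cells n l ↔ p.2 < l p.1 := by
  refine ⟨fun hp => (mem_filter.mp hp).2, fun hp => ?_⟩
  have hrow : p.1 < n := by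
    by_contra hr
    have := h.2.1 p.1 (by omega)
    omega
  have := h.apply_le p.1
  simp only [cells, mem_filter, mem_product, mem_range]
  omega

lemma prod_cells {M : Type*} [CommMonoid M] (h : IsPartitionFun n l) (f : ℕ × ℕ → M) :
    ∏ p ∈ cells n l, f p = (∏ j ∈ range (l 0), f (0, j)) *
      ∏ p ∈ cells (n - l 0) (fun i => l (i + 1)), f (p.1 + 1, p.2) := by
  have hμ := h.tail
  have hrow : (cells n l).filter (fun p => p.1 = 0) = (range (l 0)).image (fun j => (0, j)) := by
    ext ⟨a, b⟩
    simp only [mem_filter, h.mem_cells, mem_image, mem_range, Prod.mk.injEq]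
    constructor
    · rintro ⟨hb, rfl⟩; exact ⟨b, hb, rfl, rfl⟩
    · rintro ⟨j, hj, rfl, rfl⟩; exact ⟨hj, rfl⟩
  have hrest : (cells n l).filter (fun p => p.1 ≠ 0)
      = (cells (n - l 0) fun i => l (i + 1)).image (fun p => (p.1 + 1, p.2)) := by
    ext ⟨a, b⟩
    simp only [mem_filter, h.mem_cells, hμ.mem_cells, mem_image, Prod.exists, Prod.mk.injEq]
    constructor
    · rintro ⟨hb, ha⟩
      obtain ⟨i, rfl⟩ : ∃ i, a = i + 1 := ⟨a - 1, by omega⟩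
      exact ⟨i, b, hb, rfl, rfl⟩
    · rintro ⟨i, j, hj, rfl, rfl⟩; exact ⟨hj, by omega⟩
  rw [← prod_filter_mul_prod_filter_not (cells n l) (fun p => p.1 = 0), hrow, hrest,
    prod_image (by simp), prod_image (by simp)]

lemma conjPart_eq_tail_add_one (h : IsPartitionFun n l) {j : ℕ} (hj : j < l 0) :
    conjPart n l j = conjPart (n - l 0) (fun i => l (i + 1)) j + 1 := by
  have hμ := h.tail
  have hz : ∀ i, n - l 0 + 1 ≤ i → l i = 0 := fun i hi => by
    obtain ⟨i, rfl⟩ : ∃ i', i = i' + 1 := ⟨i - 1, by omega⟩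
    exact hμ.2.1 i (by omega)
  have := h.apply_le 0
  rw [conjPart_eq_of_le (by omega) hz, conjPart_succ, if_pos hj]

lemma hookLength_zero (h : IsPartitionFun n l) {j : ℕ} (hj : j < l 0) :
    hookLength n l 0 j = l 0 - j + conjPart (n - l 0) (fun i => l (i + 1)) j := by
  have := h.conjPart_eq_tail_add_one hj
  simp only [hookLength]
  omega

lemma hookLength_succ (h : IsPartitionFun n l) {i j : ℕ} (hj : j < l (i + 1)) :
    hookLength n l (i + 1) j = hookLength (n - l 0) (fun i => l (i + 1)) i j := by
  have := h.conjPart_eq_tail_add_one (hj.trans_le (h.1 (Nat.zero_le _)))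
  simp only [hookLength]
  omega

lemma hookProd_eq (h : IsPartitionFun n l) :
    hookProd n l = (∏ j ∈ range (l 0), (l 0 - j + conjPart (n - l 0) (fun i => l (i + 1)) j))
      * hookProd (n - l 0) (fun i => l (i + 1)) := by
  rw [hookProd, h.prod_cells]
  congr 1
  · exact prod_congr rfl fun j hj => h.hookLength_zero (mem_range.mp hj)
  · exact prod_congr rfl fun p hp => h.hookLength_succ (h.tail.mem_cells.mp hp)

end IsPartitionFun

theorem stmt5_general (n : ℕ) (l : ℕ → ℕ) (h : IsPartitionFun n l) :
    ((l 0).choose (n - l 0) : ℝ) * charDegree (n - l 0) (fun i => l (i + 1))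
      ≤ charDegree n l := by
  set μ : ℕ → ℕ := fun i => l (i + 1)
  set m := n - l 0
  have hμ : IsPartitionFun m μ := h.tail
  have hn : l 0 + m = n := by have := h.apply_le 0; omega
  have key := choose_mul_factorial_mul_prod_le (l 0) m (conjPart m μ) (conjPart_le m μ)
    fun j hj => conjPart_eq_zero hμ.1 ((hμ.apply_le 0).trans hj) m
  rw [hn] at key
  rw [charDegree_eq_factorial_div_hookProd, charDegree_eq_factorial_div_hookProd, mul_div_assoc',
    div_le_div_iff₀ (mod_cast hookProd_pos m μ) (mod_cast hookProd_pos n l), h.hookProd_eq]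
  norm_cast
  rw [← mul_assoc]
  exact Nat.mul_le_mul_right _ key

/-- if `λ₁ ≥ n/2` then `χ_λ(1) ≥ C(λ₁, n-λ₁) · χ_{λ∖λ₁}(1)`, where
`λ∖λ₁ = (λ₂, λ₃, …)` is the partition of `n - λ₁` obtained by deleting the first row. -/
theorem stmt5 (n : ℕ) (l : ℕ → ℕ) (h : IsPartitionFun n l) (h2 : n ≤ 2 * l 0) :
    ((l 0).choose (n - l 0) : ℝ) * charDegree (n - l 0) (fun i => l (i + 1))
      ≤ charDegree n l :=
  stmt5_general n l h
end

section
/- For n ≥ 1, the number of permutations π ∈ S_n having at least k cycles (fixed points counted as cycles) is at most n! · (log n)^{k-1}/(k-1)!. -/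
/-!
Every permutation of `Fin (n + 1)` is uniquely `swap 0 p * σ₀`, where `σ₀` fixes `0` and restricts
to some `σ ∈ S_n` (`Equiv.Perm.decomposeFin`). For `p = 0` this adds the fixed point `0` to the
cycles of `σ`; for each of the `n` choices `p ≠ 0` it inserts `0` into an existing cycle. So
`A(n, k) = #{σ ∈ S_n | k ≤ cyclesCount σ}` satisfies `A(n+1, k+1) = A(n, k) + n A(n, k+1)`.
The bound `B(n, m) = n! (log n)^m / m!` satisfies `B(n, m) + n B(n, m+1) ≤ B(n+1, m+1)`
because `log (n+1) ≥ log n + 1/(n+1)` and, by Bernoulli's inequality,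
`(L + h)^(m+1) ≥ L^(m+1) + (m+1) L^m h`; induction on `n` concludes.
-/

/-- total number of cycles of a permutation, counting fixed points as cycles
(= number of orbits on `{1,…,n}`). -/
def cyclesCount {n : ℕ} (π : Equiv.Perm (Fin n)) : ℕ :=
  (Finset.univ.filter fun x => π x = x).card + Multiset.card π.cycleType

open Equiv Equiv.Perm Finset
open scoped Nat

namespace Equiv.Perm

variable {α : Type*} [Fintype α] [DecidableEq α]

theorem IsCycle.sum_cycleType_swap_mul_self_add_two {c : Perm α} (hc : c.IsCycle) {x : α}
    (hx : c x ≠ x) :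
    (swap x (c x) * c).cycleType.sum + 2
      = #c.support + Multiset.card (swap x (c x) * c).cycleType := by
  by_cases hcc : c (c x) = x
  · have h2 : c = swap x (c x) := hc.eq_swap_of_apply_apply_eq_self hx hcc
    have h1 : swap x (c x) * c = 1 := by nth_rw 2 [h2]; exact swap_mul_self _ _
    rw [h1, h2, card_support_swap hx.symm]
    simp
  · have hx' : x ∈ c.support := mem_support.mpr hx
    rw [(hc.swap_mul hx hcc).cycleType, support_swap_mul_eq c x hcc,
      card_sdiff_of_subset (singleton_subset_iff.mpr hx')]
    simp only [Multiset.sum_singleton, Multiset.card_singleton, card_singleton]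
    have := card_pos.mpr ⟨x, hx'⟩
    omega

/-- `sum - card` of the cycle type is the number of points minus the number of cycles; cutting `x`
out of its cycle (which shortens it, or deletes it if it was a transposition) lowers it by one. -/
theorem sum_cycleType_swap_mul_self_add {g : Perm α} {x : α} (hx : g x ≠ x) :
    (swap x (g x) * g).cycleType.sum + Multiset.card g.cycleType + 1
      = g.cycleType.sum + Multiset.card (swap x (g x) * g).cycleType := by
  set c := g.cycleOf x
  have hc : c.IsCycle := isCycle_cycleOf g hx
  have hcx : c x = g x := cycleOf_apply_self g x
  have hxc : x ∈ c.support := mem_support.mpr (hcx ▸ hx)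
  obtain ⟨h, hhc, hg⟩ : ∃ h : Perm α, h.Disjoint c ∧ g = h * c :=
    ⟨g * c⁻¹, disjoint_mul_inv_of_mem_cycleFactorsFinset
      (cycleOf_mem_cycleFactorsFinset_iff.mpr (mem_support.mpr hx)), by simp⟩
  have hsc : (swap x (c x)).support ⊆ c.support := by
    rw [support_swap (hcx ▸ hx).symm]
    simp [insert_subset_iff, hxc, apply_mem_support.mpr hxc]
  have hhs : h.Disjoint (swap x (c x)) := by
    rw [disjoint_iff_disjoint_support] at hhc ⊢
    exact hhc.mono_right hsc
  have hhsc : h.Disjoint (swap x (c x) * c) := by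
    rw [disjoint_iff_disjoint_support] at hhc ⊢
    exact hhc.mono_right ((support_mul_le _ _).trans (sup_le hsc le_rfl))
  have hswap : swap x (g x) * g = h * (swap x (c x) * c) := by
    rw [← hcx, hg, ← mul_assoc, hhs.symm.commute.eq, mul_assoc]
  rw [hswap, hhsc.cycleType_mul, hg, hhc.cycleType_mul, hc.cycleType]
  have key := hc.sum_cycleType_swap_mul_self_add_two (hcx ▸ hx)
  simp only [Multiset.sum_add, Multiset.card_add, Multiset.sum_singleton, Multiset.card_singleton]
  omega

theorem decomposeFin_symm_eq_swap_mul {n : ℕ} (p : Fin (n + 1)) (e : Perm (Fin n)) :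
    decomposeFin.symm (p, e) = swap 0 p * decomposeFin.symm (0, e) := by
  refine Equiv.ext fun x => ?_
  cases x using Fin.cases <;> simp [decomposeFin_symm_apply_zero, decomposeFin_symm_apply_succ]

theorem decomposeFin_symm_zero_eq_extendDomain {n : ℕ} (e : Perm (Fin n)) :
    decomposeFin.symm (0, e) = e.extendDomain (finSuccAboveEquiv 0) := by
  refine Equiv.ext fun x => ?_
  cases x using Fin.cases with
  | zero => simp [decomposeFin_symm_apply_zero, extendDomain_apply_not_subtype]
  | succ i =>
    have hi : (⟨i.succ, Fin.succ_ne_zero i⟩ : {x : Fin (n + 1) // x ≠ 0})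
        = finSuccAboveEquiv 0 i := by
      simp [finSuccAboveEquiv_apply]
    rw [extendDomain_apply_subtype e (finSuccAboveEquiv 0) (Fin.succ_ne_zero i), hi,
      symm_apply_apply]
    simp [decomposeFin_symm_apply_succ, finSuccAboveEquiv_apply]

end Equiv.Perm

theorem cyclesCount_add_sum_cycleType {n : ℕ} (σ : Perm (Fin n)) :
    cyclesCount σ + σ.cycleType.sum = n + Multiset.card σ.cycleType := by
  have hfix : univ.filter (fun x => σ x = x) = σ.supportᶜ := by ext; simp
  rw [cyclesCount, hfix, card_compl, sum_cycleType, Fintype.card_fin]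
  have := card_le_univ σ.support
  rw [Fintype.card_fin] at this
  omega

theorem cyclesCount_decomposeFin_symm_zero {n : ℕ} (e : Perm (Fin n)) :
    cyclesCount (decomposeFin.symm (0, e)) = cyclesCount e + 1 := by
  have hct : (decomposeFin.symm (0, e)).cycleType = e.cycleType := by
    rw [decomposeFin_symm_zero_eq_extendDomain, cycleType_extendDomain]
  have h₀ := cyclesCount_add_sum_cycleType (decomposeFin.symm (0, e))
  have h := cyclesCount_add_sum_cycleType e
  rw [hct] at h₀
  omega

theorem cyclesCount_decomposeFin_symm_succ {n : ℕ} (i : Fin n) (e : Perm (Fin n)) :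
    cyclesCount (decomposeFin.symm (i.succ, e)) = cyclesCount e := by
  have hsplit : swap 0 i.succ * decomposeFin.symm (i.succ, e) = decomposeFin.symm (0, e) := by
    rw [decomposeFin_symm_eq_swap_mul i.succ e, swap_mul_self_mul]
  have h := sum_cycleType_swap_mul_self_add (g := decomposeFin.symm (i.succ, e)) (x := 0)
    (by rw [decomposeFin_symm_apply_zero]; exact Fin.succ_ne_zero i)
  rw [decomposeFin_symm_apply_zero, hsplit] at h
  have h₁ := cyclesCount_add_sum_cycleType (decomposeFin.symm (i.succ, e))
  have h₂ := cyclesCount_add_sum_cycleType (decomposeFin.symm (0, e))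
  have h₃ := cyclesCount_decomposeFin_symm_zero e
  omega

theorem card_succ_le_cyclesCount_fin_succ (n k : ℕ) :
    #{σ : Perm (Fin (n + 1)) | k + 1 ≤ cyclesCount σ}
      = #{σ : Perm (Fin n) | k ≤ cyclesCount σ}
        + n * #{σ : Perm (Fin n) | k + 1 ≤ cyclesCount σ} := by
  simp only [card_filter]
  rw [← decomposeFin.symm.sum_comp, Fintype.sum_prod_type, Fin.sum_univ_succ]
  simp only [cyclesCount_decomposeFin_symm_zero, cyclesCount_decomposeFin_symm_succ,
    Nat.add_le_add_iff_right, sum_const, card_univ, Fintype.card_fin, smul_eq_mul]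

theorem Real.log_add_inv_le_log_add_one {x : ℝ} (hx : 0 < x) :
    Real.log x + (x + 1)⁻¹ ≤ Real.log (x + 1) := by
  have h := one_sub_inv_le_log_of_pos (x := (x + 1) / x) (by positivity)
  rw [log_div (by positivity) hx.ne', inv_div] at h
  have : 1 - x / (x + 1) = (x + 1)⁻¹ := by field_simp; ring
  linarith

theorem factorial_mul_log_pow_div_add_le (n m : ℕ) (hn : 1 ≤ n) :
    n ! * Real.log n ^ m / m ! + n * (n ! * Real.log n ^ (m + 1) / (m + 1)!)
      ≤ (n + 1)! * Real.log (n + 1) ^ (m + 1) / (m + 1)! := by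
  set L := Real.log n
  set M := Real.log (n + 1)
  have hn' : (0 : ℝ) < n := by exact_mod_cast hn
  have hL : 0 ≤ L := Real.log_nonneg (by exact_mod_cast hn)
  have hLM : L + ((n : ℝ) + 1)⁻¹ ≤ M := by
    simpa [M] using Real.log_add_inv_le_log_add_one hn'
  have hBernoulli := pow_add_mul_le_add_pow_of_sq_nonneg hL (sq_nonneg _) (sq_nonneg _)
    (by positivity : 0 ≤ 2 * L + (n + 1 : ℝ)⁻¹) (m + 1)
  have key : (m + 1) * L ^ m + n * L ^ (m + 1) ≤ (n + 1) * M ^ (m + 1) := calc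
    (m + 1) * L ^ m + n * L ^ (m + 1)
        ≤ (n + 1) * (L ^ (m + 1) + (m + 1) * L ^ m * (n + 1 : ℝ)⁻¹) := by
        have : (n + 1 : ℝ) * (L ^ (m + 1) + (m + 1) * L ^ m * (n + 1 : ℝ)⁻¹)
            = (n + 1) * L ^ (m + 1) + (m + 1) * L ^ m := by
          field_simp
        linarith [pow_nonneg hL (m + 1)]
    _ ≤ (n + 1) * (L + (n + 1 : ℝ)⁻¹) ^ (m + 1) := by
        gcongr; simpa using hBernoulli
    _ ≤ (n + 1) * M ^ (m + 1) := by gcongr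
  rw [Nat.factorial_succ, Nat.factorial_succ n]
  push_cast
  calc (n ! : ℝ) * L ^ m / m ! + n * (n ! * L ^ (m + 1) / ((m + 1) * m !))
      = n ! / ((m + 1) * m !) * ((m + 1) * L ^ m + n * L ^ (m + 1)) := by
        field_simp
    _ ≤ n ! / ((m + 1) * m !) * ((n + 1) * M ^ (m + 1)) := by gcongr
    _ = (n + 1) * n ! * M ^ (m + 1) / ((m + 1) * m !) := by ring

theorem card_succ_le_cyclesCount_le (n : ℕ) (hn : 1 ≤ n) (m : ℕ) :
    (#{σ : Perm (Fin n) | m + 1 ≤ cyclesCount σ} : ℝ) ≤ n ! * Real.log n ^ m / m ! := by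
  have hm_zero (n : ℕ) :
      (#{σ : Perm (Fin n) | 0 + 1 ≤ cyclesCount σ} : ℝ) ≤ n ! * Real.log n ^ 0 / 0 ! := by
    simpa [Fintype.card_perm] using
      (card_filter_le univ _).trans_eq (card_univ (α := Perm (Fin n)))
  induction n, hn using Nat.le_induction generalizing m with
  | base =>
    rcases m with _ | m
    · exact hm_zero 1
    · rw [card_succ_le_cyclesCount_fin_succ]
      simp [cyclesCount]
  | succ n hn ih =>
    rcases m with _ | m
    · exact hm_zero (n + 1)
    · rw [card_succ_le_cyclesCount_fin_succ]
      push_cast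
      calc (#{σ : Perm (Fin n) | m + 1 ≤ cyclesCount σ} : ℝ)
            + n * #{σ : Perm (Fin n) | m + 1 + 1 ≤ cyclesCount σ}
          ≤ n ! * Real.log n ^ m / m ! + n * (n ! * Real.log n ^ (m + 1) / (m + 1)!) := by
            gcongr
            exacts [ih m, ih (m + 1)]
        _ ≤ (n + 1)! * Real.log (n + 1) ^ (m + 1) / (m + 1)! :=
            factorial_mul_log_pow_div_add_le n m hn

/-- for `n ≥ 1`, the number of permutations of `S_n` with at least `k`
cycles is at most `n! · (log n)^{k-1} / (k-1)!`. -/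
theorem stmt8 (n k : ℕ) (hn : 1 ≤ n) (hk : 1 ≤ k) :
    ((Finset.univ.filter fun π : Equiv.Perm (Fin n) => k ≤ cyclesCount π).card : ℝ)
      ≤ (n.factorial : ℝ) * Real.log n ^ (k - 1) / (k - 1).factorial := by
  obtain ⟨m, rfl⟩ := Nat.exists_eq_add_of_le' hk
  simpa using card_succ_le_cyclesCount_le n hn m
end

section
/- For all integers k ≥ 1 and μ ≥ 0 with μ ≤ k, the Stirling numbers of the second kind satisfy (μ+1)·S(k+1, μ+2) = Σ_{ν=1}^{k-μ} C(k, ν) · S(k-ν+1, μ+1). -/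
/-- Stirling numbers of the second kind. -/
def stirling2 : ℕ → ℕ → ℕ
  | 0, 0 => 1
  | 0, _ + 1 => 0
  | _ + 1, 0 => 0
  | n + 1, k + 1 => (k + 1) * stirling2 n (k + 1) + stirling2 n k

/-!
Summing the recurrence `S(j+1, m+1) = (m+1) S(j, m+1) + S(j, m)` against the weights `C(n, j)`
and using the classical expansion `S(n+1, m+1) = ∑ⱼ C(n, j) S(j, m)` twice gives
`∑ⱼ C(k, j) S(j+1, μ+1) = (μ+1) S(k+1, μ+2) + S(k+1, μ+1)`.
After the reflection `j = k - ν`, the term `ν = 0` is `S(k+1, μ+1)` and the terms with `ν > k - μ`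
vanish, which leaves the identity.
-/

open Finset

theorem stirling2_eq_stirlingSecond : stirling2 = Nat.stirlingSecond := by
  funext n m
  induction n generalizing m with
  | zero => cases m <;> rfl
  | succ n ih => cases m <;> simp [stirling2, Nat.stirlingSecond_succ_succ, ih]

theorem Finset.sum_range_choose_succ_smul {M : Type*} [AddCommMonoid M] (f : ℕ → M) (n : ℕ) :
    ∑ j ∈ range (n + 2), (n + 1).choose j • f j
      = ∑ j ∈ range (n + 1), n.choose j • (f j + f (j + 1)) := by
  have h_shift : ∑ j ∈ range (n + 1), n.choose (j + 1) • f (j + 1) + f 0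
      = ∑ j ∈ range (n + 1), n.choose j • f j := by
    have := sum_range_succ' (fun j ↦ n.choose j • f j) (n + 1)
    rwa [sum_range_succ, Nat.choose_succ_self, zero_smul, add_zero, Nat.choose_zero_right,
      one_smul, eq_comm] at this
  rw [sum_range_succ', Nat.choose_zero_right, one_smul]
  simp only [Nat.choose_succ_succ', add_smul, sum_add_distrib, smul_add, ← h_shift]
  abel

namespace Nat

theorem sum_mul_stirlingSecond_succ_succ (s : Finset ℕ) (c : ℕ → ℕ) (m : ℕ) :
    ∑ j ∈ s, c j * stirlingSecond (j + 1) (m + 1)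
      = (m + 1) * ∑ j ∈ s, c j * stirlingSecond j (m + 1)
        + ∑ j ∈ s, c j * stirlingSecond j m := by
  simp only [stirlingSecond_succ_succ, mul_add, sum_add_distrib, mul_sum, mul_left_comm]

theorem stirlingSecond_succ_succ_eq_sum_choose_mul (n m : ℕ) :
    stirlingSecond (n + 1) (m + 1) = ∑ j ∈ range (n + 1), n.choose j * stirlingSecond j m := by
  induction n generalizing m with
  | zero => simp [stirlingSecond_succ_succ]
  | succ n ih =>
    cases m with
    | zero => simp [stirlingSecond_one_right, sum_range_succ']
    | succ m =>
      simp only [← smul_eq_mul, sum_range_choose_succ_smul, smul_add, sum_add_distrib]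
      simp only [smul_eq_mul, sum_mul_stirlingSecond_succ_succ, ← ih,
        stirlingSecond_succ_succ (n + 1)]
      ring

theorem sum_range_choose_mul_stirlingSecond_succ_succ (n m : ℕ) :
    ∑ j ∈ range (n + 1), n.choose j * stirlingSecond (j + 1) (m + 1)
      = (m + 1) * stirlingSecond (n + 1) (m + 2) + stirlingSecond (n + 1) (m + 1) := by
  rw [sum_mul_stirlingSecond_succ_succ, ← stirlingSecond_succ_succ_eq_sum_choose_mul,
    ← stirlingSecond_succ_succ_eq_sum_choose_mul]

end Nat

theorem stmt13_general (k μ : ℕ) :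
    (μ + 1) * stirling2 (k + 1) (μ + 2)
      = ∑ ν ∈ Finset.Icc 1 (k - μ), k.choose ν * stirling2 (k - ν + 1) (μ + 1) := by
  rw [stirling2_eq_stirlingSecond]
  set f := fun ν ↦ k.choose ν * Nat.stirlingSecond (k - ν + 1) (μ + 1) with hf
  have h_full : ∑ ν ∈ range (k + 1), f ν
      = (μ + 1) * Nat.stirlingSecond (k + 1) (μ + 2) + Nat.stirlingSecond (k + 1) (μ + 1) := by
    rw [← sum_range_reflect, ← Nat.sum_range_choose_mul_stirlingSecond_succ_succ]
    refine sum_congr rfl fun j hj ↦ ?_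
    have hjk : j ≤ k := Nat.lt_succ_iff.mp (mem_range.mp hj)
    simp only [hf, add_tsub_cancel_right, Nat.sub_sub_self hjk, Nat.choose_symm hjk]
  have h_trunc : ∑ ν ∈ range (k - μ + 1), f ν = ∑ ν ∈ range (k + 1), f ν := by
    refine sum_subset (range_subset_range.mpr (by omega)) fun ν hν hν' ↦ ?_
    simp only [mem_range] at hν hν'
    simp only [hf, Nat.stirlingSecond_eq_zero_of_lt (show k - ν + 1 < μ + 1 by omega), mul_zero]
  have h_split : ∑ ν ∈ range (k - μ + 1), f ν = f 0 + ∑ ν ∈ Icc 1 (k - μ), f ν := by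
    rw [range_eq_Ico, sum_eq_sum_Ico_succ_bot (by omega : 0 < k - μ + 1), zero_add,
      Ico_add_one_right_eq_Icc]
  have h_zero : f 0 = Nat.stirlingSecond (k + 1) (μ + 1) := by simp [hf]
  rw [← h_trunc, h_split, h_zero] at h_full
  show _ = ∑ ν ∈ Icc 1 (k - μ), f ν
  omega

/-- for `k ≥ 1` and `0 ≤ μ ≤ k`,
`(μ+1)·S(k+1, μ+2) = Σ_{ν=1}^{k-μ} C(k, ν) · S(k-ν+1, μ+1)`. -/
theorem stmt13 (k μ : ℕ) (hk : 1 ≤ k) (hμ : μ ≤ k) :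
    (μ + 1) * stirling2 (k + 1) (μ + 2)
      = ∑ ν ∈ Finset.Icc 1 (k - μ), k.choose ν * stirling2 (k - ν + 1) (μ + 1) :=
  stmt13_general k μ
end

section
/- Let q ≥ 2 and let λ = (n-1, 1) ⊢ n. Then the multiplicity m^{(q)}_{χ_λ} = ⟨r_q, χ_λ⟩ of χ_λ in the q-th root number function equals τ(q) - 1 for all sufficiently large n, where τ(q) is the number of divisors of q. -/
/-- `s_1(π)`: the number of fixed points of a permutation. -/
def fixCount {n : ℕ} (π : Equiv.Perm (Fin n)) : ℕ :=
  (Finset.univ.filter fun x => π x = x).card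

/-!
Summing over the points, `∑ π, s₁(π ^ q)` counts the pairs `(π, x)` such that the period of `x`
under `π` divides `q`. For `1 ≤ d ≤ n`, a pair in which `x` has period exactly `d` is the same as
the injective tuple `(x, π x, …, π^(d-1) x)` together with an arbitrary permutation of the other
`n - d` points, so there are `n! / (n - d)! · (n - d)! = n!` such pairs. Hence for `n ≥ q` the sum
is `τ(q) · n!`, and the constant term `-1` of `χ_λ` contributes `-n!`.
-/

open Equiv Finset Function MulAction

namespace MulAction

variable {M α : Type*} [Monoid M] [MulAction M α]

theorem injective_pow_smul_of_period_eq {m : M} {a : α} {d : ℕ} (h : period m a = d) :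
    Injective fun i : Fin d => m ^ (i : ℕ) • a := by
  intro i j hij
  simp only [← smul_iterate_apply] at hij
  subst h
  exact Fin.ext ((iterate_eq_iterate_iff_of_lt_minimalPeriod i.isLt j.isLt).mp hij)

open Fin.NatCast in
theorem period_eq_and_pow_smul_eq_iff {d : ℕ} [NeZero d] {f : Fin d → α} (hf : Injective f)
    (m : M) (a : α) :
    (period m a = d ∧ (fun i : Fin d => m ^ (i : ℕ) • a) = f) ↔
      (f 0 = a ∧ ∀ i, m • f i = f (i + 1)) := by
  constructor
  · rintro ⟨hper, rfl⟩
    refine ⟨by simp, fun i => ?_⟩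
    dsimp only
    rw [← mul_smul, ← pow_succ', ← pow_mod_period_smul, hper, Fin.val_add, Fin.val_one',
      Nat.add_mod_mod]
  · rintro ⟨h0, hstep⟩
    have horbit (k : ℕ) : m ^ k • a = f k := by
      induction k with
      | zero => simp [h0]
      | succ k ih => rw [pow_succ', mul_smul, ih, hstep, Nat.cast_succ]
    have hdvd : period m a ∣ d :=
      pow_smul_eq_iff_period_dvd.mp (by rw [horbit, Fin.natCast_self, h0])
    have hdvd' : d ∣ period m a := by
      rw [← Fin.natCast_eq_zero]
      exact hf (by rw [← horbit, pow_period_smul, h0])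
    exact ⟨Nat.dvd_antisymm hdvd hdvd', funext fun i => by rw [horbit, Fin.cast_val_eq_self]⟩

end MulAction

namespace Equiv.Perm

variable {α ι : Type*} [Fintype α] [DecidableEq α] [Fintype ι]

theorem card_filter_forall_apply_eq_apply {f : ι → α} (hf : Injective f) (σ : Perm α) :
    #{π : Perm α | ∀ i, π (f i) = σ (f i)} = (Fintype.card α - Fintype.card ι).factorial := by
  calc #{π : Perm α | ∀ i, π (f i) = σ (f i)}
      = #{τ : Perm α | ∀ i, τ (f i) = f i} := by
        refine card_nbij' (σ⁻¹ * ·) (σ * ·) ?_ ?_ ?_ ?_ <;> intro π <;>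
          simp [eq_comm, Equiv.eq_symm_apply]
    _ = Fintype.card {τ : Perm α // ∀ a, ¬ a ∉ Set.range f → τ a = a} := by
        rw [← Fintype.card_subtype]
        simp
    _ = Fintype.card (Perm {a // a ∉ Set.range f}) :=
        (Fintype.card_congr (Perm.subtypeEquivSubtypePerm _)).symm
    _ = (Fintype.card α - Fintype.card ι).factorial := by
        rw [Fintype.card_perm, Fintype.card_subtype_compl, Set.card_range_of_injective hf]

theorem card_filter_forall_apply_eq_comp {f : ι → α} (hf : Injective f) (e : Perm ι) :
    #{π : Perm α | ∀ i, π (f i) = f (e i)} = (Fintype.card α - Fintype.card ι).factorial := by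
  have h i : e.viaFintypeEmbedding ⟨f, hf⟩ (f i) = f (e i) := viaFintypeEmbedding_apply_image ..
  simp_rw [← h]
  exact card_filter_forall_apply_eq_apply hf _

theorem card_filter_period_eq {d : ℕ} (hd : 0 < d) (hdα : d ≤ Fintype.card α) :
    #{p : Perm α × α | period p.1 p.2 = d} = (Fintype.card α).factorial := by
  have : NeZero d := ⟨hd.ne'⟩
  set S : Finset (Perm α × α) := {p | period p.1 p.2 = d}
  set T : Finset (Fin d → α) := {f | Injective f}
  let orbit : Perm α × α → Fin d → α := fun p i => p.1 ^ (i : ℕ) • p.2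
  have hmaps : Set.MapsTo orbit S T := by
    intro p hp
    simpa [T] using injective_pow_smul_of_period_eq (by simpa [S] using hp)
  have hfiber : ∀ f ∈ T, #{p ∈ S | orbit p = f} = (Fintype.card α - d).factorial := by
    intro f hfT
    have hf : Injective f := by simpa [T] using hfT
    have hfiber_eq : S.filter (orbit · = f) =
        ({π : Perm α | ∀ i, π (f i) = f (Equiv.addRight 1 i)} : Finset _) ×ˢ {f 0} := by
      ext ⟨π, a⟩
      simp only [S, orbit, mem_filter, mem_univ, true_and, mem_product, mem_singleton]
      rw [period_eq_and_pow_smul_eq_iff hf]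
      simp only [Perm.smul_def, coe_addRight, eq_comm (a := a), and_comm]
    rw [hfiber_eq, card_product, card_singleton, mul_one]
    have := card_filter_forall_apply_eq_comp (α := α) hf (Equiv.addRight 1)
    rw [Fintype.card_fin] at this
    convert this
  have hT : #T = (Fintype.card α).descFactorial d := by
    rw [← Fintype.card_subtype, Fintype.card_congr (Equiv.subtypeInjectiveEquivEmbedding _ _),
      Fintype.card_embedding_eq, Fintype.card_fin]
  rw [card_eq_sum_card_fiberwise hmaps, sum_congr rfl hfiber, sum_const, smul_eq_mul, hT,
    mul_comm, Nat.factorial_mul_descFactorial hdα]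

theorem card_filter_pow_apply_eq_self {q : ℕ} (hq : 0 < q) (hqα : q ≤ Fintype.card α) :
    #{p : Perm α × α | (p.1 ^ q) p.2 = p.2} = q.divisors.card * (Fintype.card α).factorial := by
  have hmaps : Set.MapsTo (fun p : Perm α × α => period p.1 p.2)
      ({p : Perm α × α | (p.1 ^ q) p.2 = p.2} : Finset _) q.divisors := by
    intro p hp
    exact Nat.mem_divisors.mpr ⟨pow_smul_eq_iff_period_dvd.mp (by simpa using hp), hq.ne'⟩
  rw [card_eq_sum_card_fiberwise hmaps, ← smul_eq_mul, ← sum_const]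
  refine sum_congr rfl fun d hd => ?_
  have hdq : d ∣ q := Nat.dvd_of_mem_divisors hd
  rw [filter_filter, ← card_filter_period_eq (Nat.pos_of_mem_divisors hd)
    ((Nat.divisor_le hd).trans hqα)]
  congr 1
  refine filter_congr fun p _ => and_iff_right_of_imp fun hp => ?_
  exact pow_smul_eq_iff_period_dvd.mpr (hp ▸ hdq)

end Equiv.Perm

/-- for `q ≥ 2` and `λ = (n-1,1)`, the multiplicity
`m^{(q)}_{χ_λ} = (1/n!) Σ_{π ∈ S_n} χ_λ(π^q)` of `χ_λ` in the `q`-th root number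
function, where `χ_λ(π) = s_1(π) - 1`, equals `τ(q) - 1` for all sufficiently
large `n`. -/
theorem stmt17 (q : ℕ) (hq : 2 ≤ q) :
    ∃ N : ℕ, ∀ n : ℕ, N ≤ n →
      (n.factorial : ℝ)⁻¹ * ∑ π : Equiv.Perm (Fin n), ((fixCount (π ^ q) : ℝ) - 1)
        = (q.divisors.card : ℝ) - 1 := by
  refine ⟨q, fun n hn => ?_⟩
  have hcount : ∑ π : Perm (Fin n), fixCount (π ^ q) = q.divisors.card * n.factorial := by
    have := Perm.card_filter_pow_apply_eq_self (α := Fin n) (q := q) (by omega) (by simpa using hn)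
    simpa only [fixCount, card_filter, Fintype.sum_prod_type, Fintype.card_fin] using this
  rw [sum_sub_distrib, ← Nat.cast_sum, hcount, sum_const, card_univ, Fintype.card_perm,
    Fintype.card_fin, nsmul_one]
  field_simp
  push_cast
  ring
end

section
/- Let A = {a_1, ..., a_k} and B = {b_1, ..., b_l} be finite multisets of integers ≥ 2 such that for every integer d ≥ 2, Σ_{i : d | a_i} 1/a_i = Σ_{j : d | b_j} 1/b_j. Then A = B as multisets. -/
lemma mset_exists_max (s : Multiset ℕ) (hs : s ≠ 0) : ∃ m ∈ s, ∀ x ∈ s, x ≤ m := by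
  induction s using Multiset.induction with
  | empty => simp at hs
  | cons a t ih =>
    rcases eq_or_ne t 0 with rfl | ht
    · exact ⟨a, by simp, by simp⟩
    · obtain ⟨m, hm, hmax⟩ := ih ht
      rcases le_total a m with hle | hle
      · exact ⟨m, Multiset.mem_cons_of_mem hm, by
          intro x hx; rcases Multiset.mem_cons.1 hx with rfl | hx
          · exact hle
          · exact hmax x hx⟩
      · exact ⟨a, Multiset.mem_cons_self _ _, by
          intro x hx; rcases Multiset.mem_cons.1 hx with rfl | hx
          · exact le_rfl
          · exact (hmax x hx).trans hle⟩

lemma filter_max (A : Multiset ℕ) (M : ℕ) (hM : 2 ≤ M) (hA : ∀ a ∈ A, 2 ≤ a)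
    (hb : ∀ a ∈ A, a ≤ M) :
    ((A.filter fun a => M ∣ a).map fun a => (1 : ℚ) / a).sum
      = (A.count M : ℚ) / M := by
  have : A.filter (fun a => M ∣ a) = A.filter (· = M) := by
    apply Multiset.filter_congr
    intro a ha
    constructor
    · intro hd
      exact le_antisymm (hb a ha) (Nat.le_of_dvd (by have := hA a ha; omega) hd)
    · rintro rfl; exact dvd_rfl
  rw [this, Multiset.filter_eq']
  simp [div_eq_mul_inv]

lemma stmt18_aux (n : ℕ) : ∀ (A B : Multiset ℕ), A.card = n →
    (∀ a ∈ A, 2 ≤ a) → (∀ b ∈ B, 2 ≤ b) →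
    (∀ d : ℕ, 2 ≤ d →
      ((A.filter fun a => d ∣ a).map fun a => (1 : ℚ) / a).sum
        = ((B.filter fun b => d ∣ b).map fun b => (1 : ℚ) / b).sum) →
    A = B := by
  induction n using Nat.strong_induction_on with
  | _ n ih =>
  intro A B hn hA hB h
  rcases eq_or_ne (A + B) 0 with h0 | h0
  · rw [add_eq_zero] at h0; rw [h0.1, h0.2]
  · obtain ⟨M, hM, hmax⟩ := mset_exists_max _ h0
    have hM2 : 2 ≤ M := by
      rcases Multiset.mem_add.1 hM with hm | hm
      · exact hA M hm
      · exact hB M hm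
    have hAb : ∀ a ∈ A, a ≤ M := fun a ha => hmax a (Multiset.mem_add.2 (Or.inl ha))
    have hBb : ∀ b ∈ B, b ≤ M := fun b hb => hmax b (Multiset.mem_add.2 (Or.inr hb))
    have hcount : A.count M = B.count M := by
      have := h M hM2
      rw [filter_max A M hM2 hA hAb, filter_max B M hM2 hB hBb] at this
      have hMne : (M : ℚ) ≠ 0 := by positivity
      field_simp at this
      exact_mod_cast this
    have hMA : M ∈ A := by
      by_contra hMA
      have h1 : A.count M = 0 := Multiset.count_eq_zero.2 hMA
      have h2 : B.count M = 0 := by omega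
      rcases Multiset.mem_add.1 hM with hm | hm
      · exact hMA hm
      · exact absurd (Multiset.count_pos.2 hm) (by omega)
    have hMB : M ∈ B := Multiset.count_pos.1 (by
      have := Multiset.count_pos.2 hMA; omega)
    have hAe : A = M ::ₘ A.erase M := (Multiset.cons_erase hMA).symm
    have hBe : B = M ::ₘ B.erase M := (Multiset.cons_erase hMB).symm
    have hcard : (A.erase M).card < n := by
      rw [Multiset.card_erase_of_mem hMA, Nat.pred_eq_sub_one]
      have : 0 < A.card := Multiset.card_pos.2 (by exact fun hA0 => by simp [hA0] at hMA)
      omega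
    have key : A.erase M = B.erase M := by
      apply ih (A.erase M).card hcard _ _ rfl
      · intro a ha; exact hA a (Multiset.mem_of_mem_erase ha)
      · intro b hb; exact hB b (Multiset.mem_of_mem_erase hb)
      · intro d hd
        have hd' := h d hd
        rw [hAe, hBe, Multiset.filter_cons, Multiset.filter_cons] at hd'
        have expand : ∀ (C : Multiset ℕ),
            (({M} + C).map fun a => (1 : ℚ) / a).sum
              = 1 / M + ((C.map fun a => (1 : ℚ) / a)).sum := by
          intro C; simp
        by_cases hdM : d ∣ M
        · simp only [hdM, if_pos] at hd'
          rw [expand, expand] at hd'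
          linarith
        · simp only [hdM, if_neg, not_false_iff] at hd'
          simpa using hd'
    rw [hAe, hBe, key]

/-- let `A`, `B` be finite multisets of integers `≥ 2` such that for
every integer `d ≥ 2`, `Σ_{a ∈ A, d ∣ a} 1/a = Σ_{b ∈ B, d ∣ b} 1/b`.  Then `A = B`. -/
theorem stmt18 (A B : Multiset ℕ) (hA : ∀ a ∈ A, 2 ≤ a) (hB : ∀ b ∈ B, 2 ≤ b)
    (h : ∀ d : ℕ, 2 ≤ d →
      ((A.filter fun a => d ∣ a).map fun a => (1 : ℚ) / a).sum
        = ((B.filter fun b => d ∣ b).map fun b => (1 : ℚ) / b).sum) :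
    A = B :=
  stmt18_aux A.card A B rfl hA hB h
end
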